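/- arXiv:2602.22834 — 4 statements merged into one kernel-verified Lean document; each statement's English description precedes it below -/
import Mathlib

section
/- If f : ℝ → ℝ is twice continuously differentiable and f and f'' are bounded, then the first derivative satisfies the Landau inequality ‖f'‖_∞ ≤ √(2 ‖f‖_∞ ‖f''‖_∞). -/
open Set

lemma iter_within_eq (f : ℝ → ℝ) (hf : ContDiff ℝ 2 f) {a b : ℝ} (hab : a < b) :
    ∀ t ∈ Icc a b, iteratedDerivWithin 1 f (Icc a b) t = deriv f t := by
  intro t ht
  rw [iteratedDerivWithin_one]
  exact ((hf.differentiable (by norm_num)) t).derivWithin ((uniqueDiffOn_Icc hab) t ht)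

lemma hderiv1 (f : ℝ → ℝ) (hf : ContDiff ℝ 2 f) : ContDiff ℝ 1 (deriv f) := by
  have := (contDiff_succ_iff_deriv (n := 1)).mp (by exact_mod_cast hf)
  exact this.2.2

lemma taylor_bound (f : ℝ → ℝ) (hf : ContDiff ℝ 2 f) (M2 : ℝ)
    (hM2 : ∀ x, |deriv (deriv f) x| ≤ M2) (x h : ℝ) (hh : 0 < h) :
    |f (x + h) - f x - deriv f x * h| ≤ M2 * h ^ 2 / 2 := by
  have hab : x < x + h := by linarith
  have hud := uniqueDiffOn_Icc hab
  have heqon := iter_within_eq f hf hab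
  have hdf := hf.differentiable (by norm_num)
  have hdf' := (hderiv1 f hf).differentiable (by norm_num)
  have hI : uIcc x (x + h) = Icc x (x + h) := uIcc_of_le hab.le
  have hO : uIoo x (x + h) = Ioo x (x + h) := uIoo_of_lt hab
  obtain ⟨ξ, hξ, heq⟩ := taylor_mean_remainder_lagrange (n := 1) (ne_of_lt hab)
    (hf.contDiffOn.of_le (by norm_num))
    (by
      rw [hI, hO]
      apply DifferentiableOn.congr (f := deriv f)
      · exact (hdf'.differentiableOn)
      · intro t ht; exact heqon t (Ioo_subset_Icc_self ht))
  rw [hI] at heq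
  rw [hO] at hξ
  have h2 : iteratedDerivWithin 2 f (Icc x (x + h)) ξ = deriv (deriv f) ξ := by
    have hξI : ξ ∈ Icc x (x + h) := Ioo_subset_Icc_self hξ
    rw [show (2 : ℕ) = 1 + 1 from rfl, iteratedDerivWithin_succ,
      derivWithin_congr (fun t ht => heqon t ht) (heqon ξ hξI)]
    exact (hdf' ξ).derivWithin (hud ξ hξI)
  have htay : taylorWithinEval f 1 (Icc x (x + h)) x (x + h) = f x + deriv f x * h := by
    rw [taylor_within_apply]
    simp [Finset.sum_range_succ, iteratedDerivWithin_zero,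
      iteratedDerivWithin_one,
      ((hdf x).derivWithin (hud x (left_mem_Icc.mpr (le_of_lt hab))))]
    ring
  rw [htay, h2] at heq
  have : f (x + h) - f x - deriv f x * h = deriv (deriv f) ξ * h ^ 2 / 2 := by
    rw [show f (x+h) - f x - deriv f x * h = f (x+h) - (f x + deriv f x * h) by ring, heq]
    norm_num
  rw [this, abs_div, abs_mul]
  have h1 : |deriv (deriv f) ξ| * |h ^ 2| ≤ M2 * h ^ 2 := by
    rw [abs_of_nonneg (sq_nonneg h)]
    exact mul_le_mul_of_nonneg_right (hM2 ξ) (sq_nonneg h)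
  have : |(2 : ℝ)| = 2 := by norm_num
  rw [this]
  linarith

lemma key_ineq (f : ℝ → ℝ) (hf : ContDiff ℝ 2 f)
    (Mf M2 : ℝ) (hMf : ∀ x, |f x| ≤ Mf) (hM2 : ∀ x, |deriv (deriv f) x| ≤ M2)
    (x h : ℝ) (hh : 0 < h) : |deriv f x| ≤ Mf / h + M2 * h / 2 := by
  set g : ℝ → ℝ := fun t => f (2 * x - t) with hg
  have hgc : ContDiff ℝ 2 g := hf.comp (contDiff_const.sub contDiff_id)
  have hg1 : deriv g = fun t => -deriv f (2 * x - t) := by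
    funext t; exact deriv_comp_const_sub ..
  have hg2 : ∀ t, deriv (deriv g) t = deriv (deriv f) (2 * x - t) := by
    intro t
    rw [hg1]
    rw [show (fun t => -deriv f (2 * x - t)) = fun t => -(fun s => deriv f (2 * x - s)) t from rfl,
      deriv.fun_neg, deriv_comp_const_sub, neg_neg]
  have hA := taylor_bound f hf M2 hM2 x h hh
  have hB := taylor_bound g hgc M2 (fun t => by rw [hg2]; exact hM2 _) x h hh
  have e1 : g (x + h) = f (x - h) := by simp [hg]; ring_nf
  have e2 : g x = f x := by simp [hg]; ring_nf
  have e3 : deriv g x = -deriv f x := by rw [hg1]; simp; ring_nf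
  rw [e1, e2, e3] at hB
  have hfx1 := hMf (x + h)
  have hfx2 := hMf (x - h)
  have habs1 := abs_le.mp hA
  have habs2 := abs_le.mp hB
  have habs3 := abs_le.mp hfx1
  have habs4 := abs_le.mp hfx2
  have hmain : |deriv f x| * (2 * h) ≤ 2 * Mf + M2 * h ^ 2 := by
    rw [show |deriv f x| * (2 * h) = |deriv f x * (2 * h)| by
      rw [abs_mul, abs_of_nonneg (by positivity : (0:ℝ) ≤ 2 * h)]]
    rw [abs_le]
    constructor <;> nlinarith
  rw [show Mf / h + M2 * h / 2 = (2 * Mf + M2 * h ^ 2) / (2 * h) by field_simp,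
    le_div_iff₀ (by positivity)]
  exact hmain

/-- **Landau's inequality.** If `f : ℝ → ℝ` is twice continuously differentiable, `f` is
bounded by `Mf` and `f''` is bounded by `M2`, then `‖f'‖_∞ ≤ √(2 Mf M2)`. -/
theorem landau_inequality (f : ℝ → ℝ) (hf : ContDiff ℝ 2 f)
    (Mf M2 : ℝ) (hMf : ∀ x, |f x| ≤ Mf) (hM2 : ∀ x, |deriv (deriv f) x| ≤ M2) :
    ∀ x, |deriv f x| ≤ Real.sqrt (2 * Mf * M2) := by
  intro x
  have hMf0 : 0 ≤ Mf := le_trans (abs_nonneg _) (hMf 0)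
  have hM20 : 0 ≤ M2 := le_trans (abs_nonneg _) (hM2 0)
  by_cases hpos : 0 < Mf ∧ 0 < M2
  · obtain ⟨hMfp, hM2p⟩ := hpos
    set C := Real.sqrt (2 * Mf * M2) with hC
    set h := Real.sqrt (2 * Mf / M2) with hhdef
    have hh : 0 < h := Real.sqrt_pos.mpr (by positivity)
    have hh2 : h ^ 2 = 2 * Mf / M2 := Real.sq_sqrt (by positivity)
    have hCh : C * h = 2 * Mf := by
      rw [hC, hhdef, ← Real.sqrt_mul (by positivity)]
      rw [show 2 * Mf * M2 * (2 * Mf / M2) = (2 * Mf) ^ 2 by field_simp]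
      exact Real.sqrt_sq (by positivity)
    have hkey := key_ineq f hf Mf M2 hMf hM2 x h hh
    have hM2h : M2 * h ^ 2 = 2 * Mf := by rw [hh2]; field_simp
    have e1' : Mf / h = C / 2 := by
      rw [div_eq_div_iff (ne_of_gt hh) two_ne_zero]; linarith [hCh]
    have e2' : M2 * h = C := by
      have : M2 * h * h = C * h := by linear_combination hM2h - hCh
      exact mul_right_cancel₀ (ne_of_gt hh) this
    have heq : Mf / h + M2 * h / 2 = C := by rw [e1', e2']; ring
    linarith
  · have : ∀ ε > (0:ℝ), |deriv f x| ≤ 0 + ε := by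
      intro ε hε
      rcases not_and_or.mp hpos with hc | hc
      · have hMfz : Mf = 0 := le_antisymm (not_lt.mp hc) hMf0
        have hkey := key_ineq f hf Mf M2 hMf hM2 x (2 * ε / (M2 + 1)) (by positivity)
        rw [hMfz] at hkey
        have hratio : M2 / (M2 + 1) ≤ 1 := by
          rw [div_le_one (by linarith)]; linarith
        have heq : M2 * (2 * ε / (M2 + 1)) / 2 = ε * (M2 / (M2 + 1)) := by
          field_simp
        have hb : M2 * (2 * ε / (M2 + 1)) / 2 ≤ ε := by
          rw [heq]
          nlinarith [mul_le_of_le_one_right (le_of_lt hε) hratio]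
        simpa using le_trans hkey (by simpa using hb)
      · have hM2z : M2 = 0 := le_antisymm (not_lt.mp hc) hM20
        have hkey := key_ineq f hf Mf M2 hMf hM2 x ((Mf + 1) / ε) (by positivity)
        rw [hM2z] at hkey
        have : Mf / ((Mf + 1) / ε) ≤ ε := by
          rw [div_div_eq_mul_div, div_le_iff₀ (by linarith)]
          nlinarith
        simpa using le_trans hkey (by linarith)
    have h0 : |deriv f x| ≤ 0 := le_of_forall_pos_le_add (by simpa using this)
    exact le_trans h0 (Real.sqrt_nonneg _)
end

section
/- Suppose f : ℝ → ℝ is smooth, ‖f‖_∞ ≤ C h^α with α > 0, and for every k the k-th derivative satisfies ‖f^{(k)}‖_∞ ≤ C_k (uniformly in h ∈ (0,1]). If moreover ‖f'‖_∞ ≥ c h^{α-β} for some β > 0 and all small h, then repeatedly applying the Landau inequality ‖g'‖_∞ ≤ √(2‖g‖_∞ ‖g''‖_∞) yields a contradiction; hence in fact for every ε > 0 there is h₀ > 0 with ‖f'‖_∞ ≤ h^{α-ε} for all 0 < h < h₀. -/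
open Set


lemma landau_crude (g : ℝ → ℝ) (hg : ContDiff ℝ (↑(⊤:ℕ∞)) g) (A B : ℝ) (hA : 0 < A) (hB : 0 < B)
    (hg0 : ∀ x, |g x| ≤ A) (hg2 : ∀ x, |deriv (deriv g) x| ≤ B) (x : ℝ) :
    |deriv g x| ≤ 3 * Real.sqrt (A * B) := by
  set t := Real.sqrt (A / B) with ht
  have ht0 : 0 < t := Real.sqrt_pos.2 (div_pos hA hB)
  have hgd : Differentiable ℝ g := hg.differentiable (by simp)
  have hg1 : ContDiff ℝ (↑(⊤:ℕ∞)) (deriv g) := (contDiff_infty_iff_deriv.mp hg).2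
  have hg1d : Differentiable ℝ (deriv g) := hg1.differentiable (by simp)
  obtain ⟨ξ, hξ, hslope⟩ := exists_deriv_eq_slope g (show x < x + t by linarith)
    hgd.continuous.continuousOn (hgd.differentiableOn)
  have h1 : |deriv g ξ| ≤ 2 * A / t := by
    rw [hslope, abs_div]
    have hnum : |g (x + t) - g x| ≤ 2 * A := by
      calc |g (x + t) - g x| ≤ |g (x+t)| + |g x| := abs_sub _ _
        _ ≤ 2 * A := by have := hg0 (x+t); have := hg0 x; linarith
    have hden : |x + t - x| = t := by rw [show x + t - x = t by ring]; exact abs_of_pos ht0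
    rw [hden]; gcongr
  have h2 : |deriv g x - deriv g ξ| ≤ B * t := by
    obtain ⟨η, hη, hslope2⟩ := exists_deriv_eq_slope (deriv g) hξ.1
      hg1d.continuous.continuousOn hg1d.differentiableOn
    have hne : ξ - x ≠ 0 := by have := hξ.1; intro hc; rw [sub_eq_zero] at hc; linarith
    have heq : deriv g ξ - deriv g x = deriv (deriv g) η * (ξ - x) := by
      rw [hslope2, div_mul_cancel₀ _ hne]
    rw [abs_sub_comm, heq, abs_mul]
    have hx1 : |ξ - x| ≤ t := by
      rw [abs_of_pos (by linarith [hξ.1, hξ.2] : (0:ℝ) < ξ - x)]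
      have := hξ.2; simp only [mem_Ioo] at hξ; linarith [hξ.2]
    exact mul_le_mul (hg2 η) hx1 (abs_nonneg _) hB.le
  have h3 : |deriv g x| ≤ 2 * A / t + B * t := by
    have : |deriv g x| ≤ |deriv g ξ| + |deriv g x - deriv g ξ| := by
      have := abs_add_le (deriv g ξ) (deriv g x - deriv g ξ)
      simpa using this
    linarith
  have key : 2 * A / t + B * t = 3 * Real.sqrt (A * B) := by
    have hsa : Real.sqrt A ^ 2 = A := Real.sq_sqrt hA.le
    have hsb : Real.sqrt B ^ 2 = B := Real.sq_sqrt hB.le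
    have hsa0 : 0 < Real.sqrt A := Real.sqrt_pos.2 hA
    have hsb0 : 0 < Real.sqrt B := Real.sqrt_pos.2 hB
    have htt : t = Real.sqrt A / Real.sqrt B := by rw [ht, Real.sqrt_div hA.le]
    have hab : Real.sqrt (A * B) = Real.sqrt A * Real.sqrt B := Real.sqrt_mul hA.le B
    rw [htt, hab]
    field_simp
    nlinarith [hsa, hsb]
  linarith

lemma kolmogorov_step : ∀ n : ℕ, 1 ≤ n → ∃ c : ℝ, 0 < c ∧
    ∀ g : ℝ → ℝ, ContDiff ℝ (↑(⊤:ℕ∞)) g →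
    (∀ k : ℕ, ∃ D : ℝ, ∀ x, |iteratedDeriv k g x| ≤ D) →
    ∀ A B : ℝ, 0 < A → 0 < B → (∀ x, |g x| ≤ A) → (∀ x, |iteratedDeriv n g x| ≤ B) →
    ∀ x, |deriv g x| ≤ c * A ^ (1 - 1/(n:ℝ)) * B ^ (1/(n:ℝ)) := by
  intro n hn
  induction n, hn using Nat.le_induction with
  | base =>
    refine ⟨1, one_pos, fun g hg hder A B hA hB hgA hgB x => ?_⟩
    simp only [Nat.cast_one, div_one, sub_self, Real.rpow_zero, Real.rpow_one, one_mul, mul_one]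
    have := hgB x
    rwa [iteratedDeriv_one] at this
  | succ n hn IH =>
    obtain ⟨c, hc, hIH⟩ := IH
    set p : ℝ := (n : ℝ) with hp
    have hp1 : (1:ℝ) ≤ p := by rw [hp]; exact_mod_cast hn
    have hp0 : 0 < p := by linarith
    refine ⟨(9 * c) ^ (p / (p + 1)), by positivity, fun g hg hder A B hA hB hgA hgB x => ?_⟩
    -- cast for the goal
    have hcast : ((n + 1 : ℕ) : ℝ) = p + 1 := by push_cast [hp]; ring
    rw [hcast]
    -- sup of |deriv g|
    obtain ⟨D1, hD1⟩ := hder 1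
    have hD1' : ∀ y, |deriv g y| ≤ D1 := by
      intro y; have := hD1 y; rwa [iteratedDeriv_one] at this
    set S : Set ℝ := Set.range (fun y => |deriv g y|) with hS
    have hSne : S.Nonempty := ⟨|deriv g 0|, ⟨0, rfl⟩⟩
    have hSbdd : BddAbove S := ⟨D1, by rintro _ ⟨y, rfl⟩; exact hD1' y⟩
    set M : ℝ := sSup S with hM
    have hMle : ∀ y, |deriv g y| ≤ M := fun y => le_csSup hSbdd ⟨y, rfl⟩
    have hM0 : 0 ≤ M := le_trans (abs_nonneg _) (hMle 0)
    rcases eq_or_lt_of_le hM0 with hM0' | hMpos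
    · -- M = 0
      have : |deriv g x| ≤ 0 := hM0' ▸ hMle x
      have hrhs : (0:ℝ) ≤ (9 * c) ^ (p / (p + 1)) * A ^ (1 - 1/(p+1)) * B ^ (1/(p+1)) := by
        positivity
      linarith
    · -- M > 0 : apply IH to deriv g
      have hg1 : ContDiff ℝ (↑(⊤:ℕ∞)) (deriv g) := (contDiff_infty_iff_deriv.mp hg).2
      have hder1 : ∀ k : ℕ, ∃ D : ℝ, ∀ y, |iteratedDeriv k (deriv g) y| ≤ D := by
        intro k
        obtain ⟨D, hD⟩ := hder (k + 1)
        exact ⟨D, fun y => by have := hD y; rwa [iteratedDeriv_succ'] at this⟩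
      have hgB' : ∀ y, |iteratedDeriv n (deriv g) y| ≤ B := by
        intro y; have := hgB y; rwa [iteratedDeriv_succ'] at this
      have hB2 := hIH (deriv g) hg1 hder1 M B hMpos hB hMle hgB'
      set B2 : ℝ := c * M ^ (1 - 1/p) * B ^ (1/p) with hB2def
      have hB2pos : 0 < B2 := by positivity
      have hland : ∀ y, |deriv g y| ≤ 3 * Real.sqrt (A * B2) :=
        fun y => landau_crude g hg A B2 hA hB2pos hgA hB2 y
      have hMland : M ≤ 3 * Real.sqrt (A * B2) :=
        csSup_le hSne (by rintro _ ⟨y, rfl⟩; exact hland y)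
      -- M^2 ≤ 9 * A * B2
      have hsq : M ^ 2 ≤ 9 * (A * B2) := by
        nlinarith [Real.sq_sqrt (by positivity : (0:ℝ) ≤ A * B2),
          Real.sqrt_nonneg (A * B2), hMland, hM0]
      -- M^((p+1)/p) ≤ 9 * c * A * B^(1/p)
      have hMθ : 0 < M ^ (1 - 1/p) := Real.rpow_pos_of_pos hMpos _
      have hkey : M ^ ((p+1)/p) ≤ 9 * c * A * B ^ (1/p) := by
        have hsplit : M ^ ((p+1)/p) * M ^ (1 - 1/p) = M ^ 2 := by
          rw [← Real.rpow_add hMpos,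
            show (p+1)/p + (1 - 1/p) = 2 by field_simp; ring,
            show (2:ℝ) = ((2:ℕ):ℝ) by norm_num, Real.rpow_natCast]
        have h9 : M ^ 2 ≤ (9 * c * A * B ^ (1/p)) * M ^ (1 - 1/p) := by
          rw [hB2def] at hsq; nlinarith [hsq]
        have h10 : M ^ ((p+1)/p) * M ^ (1 - 1/p) ≤
            (9 * c * A * B ^ (1/p)) * M ^ (1 - 1/p) := hsplit.le.trans h9
        exact le_of_mul_le_mul_right h10 hMθ
      -- raise to power p/(p+1)
      have hq0 : 0 < p / (p + 1) := by positivity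
      have hfin : M ≤ (9 * c) ^ (p/(p+1)) * A ^ (p/(p+1)) * B ^ (1/(p+1)) := by
        have h11 := Real.rpow_le_rpow (by positivity) hkey hq0.le
        have hL : (M ^ ((p+1)/p)) ^ (p/(p+1)) = M := by
          rw [← Real.rpow_mul hM0, show (p+1)/p * (p/(p+1)) = 1 by field_simp, Real.rpow_one]
        have hR : (9 * c * A * B ^ (1/p)) ^ (p/(p+1)) =
            (9 * c) ^ (p/(p+1)) * A ^ (p/(p+1)) * B ^ (1/(p+1)) := by
          rw [Real.mul_rpow (by positivity) (by positivity),
            Real.mul_rpow (by positivity) (by positivity),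
            ← Real.rpow_mul hB.le, show 1/p * (p/(p+1)) = 1/(p+1) by field_simp]
        rw [hL, hR] at h11
        exact h11
      calc |deriv g x| ≤ M := hMle x
        _ ≤ (9 * c) ^ (p/(p+1)) * A ^ (p/(p+1)) * B ^ (1/(p+1)) := hfin
        _ = (9 * c) ^ (p/(p+1)) * A ^ (1 - 1/(p+1)) * B ^ (1/(p+1)) := by
            rw [show p/(p+1) = 1 - 1/(p+1) by field_simp; ring]

/-- If `f h : ℝ → ℝ` is smooth with `‖f h‖_∞ ≤ C h^α` (`α > 0`) and all derivatives
uniformly bounded in `h ∈ (0,1]`, then (by iterating Landau's inequality) for every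
`ε > 0` there is `h₀ > 0` such that `‖(f h)'‖_∞ ≤ h^(α-ε)` for all `0 < h < h₀`. -/
theorem deriv_bound_of_small_sup (α C : ℝ) (hα : 0 < α) (hC : 0 < C)
    (f : ℝ → ℝ → ℝ)
    (hsmooth : ∀ h ∈ Set.Ioc (0 : ℝ) 1, ContDiff ℝ (⊤ : ℕ∞) (f h))
    (hbound : ∀ h ∈ Set.Ioc (0 : ℝ) 1, ∀ x, |f h x| ≤ C * h ^ α)
    (hderivs : ∀ k : ℕ, ∃ Ck : ℝ, ∀ h ∈ Set.Ioc (0 : ℝ) 1, ∀ x,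
      |iteratedDeriv k (f h) x| ≤ Ck) :
    ∀ ε > 0, ∃ h₀ > 0, ∀ h : ℝ, 0 < h → h < h₀ →
      ∀ x, |deriv (f h) x| ≤ h ^ (α - ε) := by
  intro ε hε
  set n : ℕ := ⌈α / ε⌉₊ + 1 with hn
  have hn1 : 1 ≤ n := Nat.le_add_left 1 _
  have hnp : (0:ℝ) < (n:ℝ) := by positivity
  have hαn : α / (n:ℝ) < ε := by
    have h1 : α / ε < (n:ℝ) := by
      have := Nat.le_ceil (α / ε)
      have : (⌈α / ε⌉₊ : ℝ) < (n:ℝ) := by rw [hn]; push_cast; linarith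
      linarith [Nat.le_ceil (α / ε)]
    rw [div_lt_iff₀ hnp]
    rw [div_lt_iff₀ hε] at h1
    linarith
  obtain ⟨c, hc, hkol⟩ := kolmogorov_step n hn1
  obtain ⟨Cn, hCn⟩ := hderivs n
  set B : ℝ := |Cn| + 1 with hB
  have hBpos : 0 < B := by positivity
  set K : ℝ := c * C ^ (1 - 1/(n:ℝ)) * B ^ (1/(n:ℝ)) with hK
  have hKpos : 0 < K := by positivity
  set δ : ℝ := ε - α / (n:ℝ) with hδ
  have hδpos : 0 < δ := by rw [hδ]; linarith
  refine ⟨min 1 (K⁻¹ ^ (1/δ)), lt_min one_pos (by positivity), fun h hh0 hh1 x => ?_⟩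
  have hIoc : h ∈ Set.Ioc (0:ℝ) 1 := ⟨hh0, le_of_lt (lt_of_lt_of_le hh1 (min_le_left _ _))⟩
  have hder_h : ∀ k : ℕ, ∃ D : ℝ, ∀ x, |iteratedDeriv k (f h) x| ≤ D := by
    intro k; obtain ⟨Ck, hCk⟩ := hderivs k; exact ⟨Ck, fun x => hCk h hIoc x⟩
  have hApos : 0 < C * h ^ α := by positivity
  have hsm : ContDiff ℝ (↑(⊤:ℕ∞)) (f h) := (hsmooth h hIoc).of_le (by simp)
  have hBbd : ∀ x, |iteratedDeriv n (f h) x| ≤ B := by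
    intro x
    calc |iteratedDeriv n (f h) x| ≤ Cn := hCn h hIoc x
      _ ≤ |Cn| := le_abs_self Cn
      _ ≤ B := by rw [hB]; linarith
  have hmain := hkol (f h) hsm hder_h (C * h ^ α) B hApos hBpos (hbound h hIoc) hBbd x
  -- rewrite RHS
  have hrw : c * (C * h ^ α) ^ (1 - 1/(n:ℝ)) * B ^ (1/(n:ℝ)) = K * h ^ (α - α/(n:ℝ)) := by
    rw [Real.mul_rpow hC.le (by positivity), ← Real.rpow_mul hh0.le,
      show α * (1 - 1/(n:ℝ)) = α - α/(n:ℝ) by field_simp, hK]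
    ring
  rw [hrw] at hmain
  have hsplit : h ^ (α - α/(n:ℝ)) = h ^ δ * h ^ (α - ε) := by
    rw [← Real.rpow_add hh0, show δ + (α - ε) = α - α/(n:ℝ) by rw [hδ]; ring]
  have hlt : h < K⁻¹ ^ (1/δ) := lt_of_lt_of_le hh1 (min_le_right _ _)
  have hKh : K * h ^ δ ≤ 1 := by
    have h1 : h ^ δ < (K⁻¹ ^ (1/δ)) ^ δ := Real.rpow_lt_rpow hh0.le hlt hδpos
    have h2 : (K⁻¹ ^ (1/δ)) ^ δ = K⁻¹ := by
      rw [← Real.rpow_mul (by positivity), show 1/δ * δ = 1 by field_simp, Real.rpow_one]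
    rw [h2] at h1
    calc K * h ^ δ ≤ K * K⁻¹ := by
          exact mul_le_mul_of_nonneg_left h1.le hKpos.le
      _ = 1 := mul_inv_cancel₀ hKpos.ne'
  calc |deriv (f h) x| ≤ K * h ^ (α - α/(n:ℝ)) := hmain
    _ = (K * h ^ δ) * h ^ (α - ε) := by rw [hsplit]; ring
    _ ≤ 1 * h ^ (α - ε) := by
        exact mul_le_mul_of_nonneg_right hKh (Real.rpow_nonneg hh0.le _)
    _ = h ^ (α - ε) := one_mul _
end

section
/- Let κ = [[A, B],[C, D]] be a real symplectic 2d×2d matrix (in d×d blocks). Then the complex matrix M := A + iB is invertible. -/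
open Matrix ComplexOrder

/-- For a real symplectic matrix `κ = [[A,B],[C,D]]`, the complex matrix `M = A + iB`
is invertible. -/
theorem symplectic_M_invertible (d : ℕ) (A B C D : Matrix (Fin d) (Fin d) ℝ)
    (hsymp : (Matrix.fromBlocks A B C D)ᵀ * (Matrix.fromBlocks 0 1 (-1) 0) *
      (Matrix.fromBlocks A B C D) = Matrix.fromBlocks 0 1 (-1) 0) :
    IsUnit (A.map (Complex.ofReal) + Complex.I • B.map (Complex.ofReal)) := by
  classical
  -- extract the block equations over ℝ
  rw [Matrix.fromBlocks_transpose, Matrix.fromBlocks_multiply, Matrix.fromBlocks_multiply]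
    at hsymp
  simp only [Matrix.mul_zero, Matrix.mul_one, Matrix.mul_neg, zero_add, add_zero, mul_zero, mul_one, mul_neg, neg_mul] at hsymp
  have e11 := congrArg Matrix.toBlocks₁₁ hsymp
  have e12 := congrArg Matrix.toBlocks₁₂ hsymp
  have e21 := congrArg Matrix.toBlocks₂₁ hsymp
  have e22 := congrArg Matrix.toBlocks₂₂ hsymp
  simp only [Matrix.toBlocks_fromBlocks₁₁, Matrix.toBlocks_fromBlocks₁₂,
    Matrix.toBlocks_fromBlocks₂₁, Matrix.toBlocks_fromBlocks₂₂] at e11 e12 e21 e22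
  -- real relations
  have r1 : Aᵀ * D - Cᵀ * B = 1 := by
    have : -(Cᵀ * B) + Aᵀ * D = Aᵀ * D - Cᵀ * B := by abel
    rw [← this]; simpa using e12
  have r2 : Dᵀ * A - Bᵀ * C = 1 := by
    have h := e21
    have : Dᵀ * A - Bᵀ * C = -(-(Dᵀ * A) + Bᵀ * C) := by abel
    rw [this]; simp only [show -(Dᵀ * A) + Bᵀ * C = -1 by simpa using e21]; simp
  have r3 : Aᵀ * C = Cᵀ * A := by
    have h : -(Cᵀ * A) + Aᵀ * C = 0 := by simpa using e11
    have := eq_of_sub_eq_zero (by rw [← h]; abel : Aᵀ * C - Cᵀ * A = 0)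
    exact this
  have r4 : Bᵀ * D = Dᵀ * B := by
    have h : -(Dᵀ * B) + Bᵀ * D = 0 := by simpa using e22
    exact eq_of_sub_eq_zero (by rw [← h]; abel : Bᵀ * D - Dᵀ * B = 0)
  -- move to ℂ
  let g : Matrix (Fin d) (Fin d) ℝ →+* Matrix (Fin d) (Fin d) ℂ :=
    Complex.ofRealHom.mapMatrix
  set A' : Matrix (Fin d) (Fin d) ℂ := A.map Complex.ofReal with hA'
  set B' : Matrix (Fin d) (Fin d) ℂ := B.map Complex.ofReal with hB'
  set C' : Matrix (Fin d) (Fin d) ℂ := C.map Complex.ofReal with hC'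
  set D' : Matrix (Fin d) (Fin d) ℂ := D.map Complex.ofReal with hD'
  have gA : g A = A' := rfl
  have gB : g B = B' := rfl
  have gC : g C = C' := rfl
  have gD : g D = D' := rfl
  have gtr : ∀ X : Matrix (Fin d) (Fin d) ℝ, g Xᵀ = (g X)ᵀ := fun X => by
    simpa [g, RingHom.mapMatrix_apply] using
      (Matrix.transpose_map (f := Complex.ofRealHom) (M := X))
  have h1 : A'ᵀ * D' - C'ᵀ * B' = 1 := by
    rw [← gA, ← gB, ← gC, ← gD, ← gtr, ← gtr, ← _root_.map_mul g, ← _root_.map_mul g, ← map_sub, r1, _root_.map_one g]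
  have h2 : D'ᵀ * A' - B'ᵀ * C' = 1 := by
    rw [← gA, ← gB, ← gC, ← gD, ← gtr, ← gtr, ← _root_.map_mul g, ← _root_.map_mul g, ← map_sub, r2, _root_.map_one g]
  have h3 : A'ᵀ * C' = C'ᵀ * A' := by
    rw [← gA, ← gC, ← gtr, ← gtr, ← _root_.map_mul g, ← _root_.map_mul g, r3]
  have h4 : B'ᵀ * D' = D'ᵀ * B' := by
    rw [← gB, ← gD, ← gtr, ← gtr, ← _root_.map_mul g, ← _root_.map_mul g, r4]
  have h1' : A'ᵀ * D' = 1 + C'ᵀ * B' := sub_eq_iff_eq_add.mp h1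
  have h2' : D'ᵀ * A' = 1 + B'ᵀ * C' := sub_eq_iff_eq_add.mp h2
  set M : Matrix (Fin d) (Fin d) ℂ := A' + Complex.I • B' with hM
  set N : Matrix (Fin d) (Fin d) ℂ := C' + Complex.I • D' with hN
  -- conjugate transposes
  have hMH : Mᴴ = A'ᵀ - Complex.I • B'ᵀ := by
    ext i j
    simp [hM, hA', hB', Matrix.conjTranspose_apply, Matrix.add_apply, Matrix.smul_apply,
      Matrix.map_apply, Complex.conj_ofReal, sub_eq_add_neg]
  have hNH : Nᴴ = C'ᵀ - Complex.I • D'ᵀ := by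
    ext i j
    simp [hN, hC', hD', Matrix.conjTranspose_apply, Matrix.add_apply, Matrix.smul_apply,
      Matrix.map_apply, Complex.conj_ofReal, sub_eq_add_neg]
  -- the key identity Mᴴ N - Nᴴ M = 2i·1
  have key : Mᴴ * N - Nᴴ * M = (2 * Complex.I) • 1 := by
    rw [hMH, hNH, hM, hN]
    simp only [sub_mul, mul_add, add_mul, smul_mul_assoc, Matrix.mul_smul, smul_smul,
      Complex.I_mul_I, neg_smul, one_smul, h1', h2', h3, h4]
    module
  -- conclude invertibility
  rw [Matrix.isUnit_iff_isUnit_det, isUnit_iff_ne_zero]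
  intro hdet
  obtain ⟨v, hv, hMv⟩ := (Matrix.exists_mulVec_eq_zero_iff).mpr hdet
  have hcomp := congrArg (fun X : Matrix (Fin d) (Fin d) ℂ =>
    dotProduct (star v) (X.mulVec v)) key
  simp only [Matrix.sub_mulVec, dotProduct_sub, ← Matrix.mulVec_mulVec, hMv,
    Matrix.mulVec_zero, dotProduct_zero, Matrix.dotProduct_mulVec,
    ← Matrix.star_mulVec, star_zero, zero_dotProduct, sub_zero,
    Matrix.smul_mulVec, Matrix.one_mulVec, dotProduct_smul,
    Matrix.zero_vecMul, smul_eq_mul] at hcomp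
  have hzero : dotProduct (star v) v = 0 := by
    rcases mul_eq_zero.mp hcomp.symm with h | h
    · exact absurd h (by simp [Complex.I_ne_zero])
    · exact h
  exact hv (dotProduct_star_self_eq_zero.mp hzero)
end

section
/- Let κ = [[A,B],[C,D]] be real symplectic, M = A+iB, N = C+iD, and Γ = N M⁻¹. Then the Hilbert–Schmidt identity Tr( Im(Γ)^{-1/2} conj(Γ) Γ Im(Γ)^{-1/2} ) = Tr( conj(N)ᵀ N ) holds; equivalently ‖Γ Im(Γ)^{-1/2}‖_HS = ‖N‖_HS. -/
open Matrix

set_option maxHeartbeats 2000000 in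
/-- For a real symplectic `κ = [[A,B],[C,D]]`, `M = A+iB`, `N = C+iD`, `Γ = N M⁻¹`, and
`S` the positive square root of `Im Γ`, one has the Hilbert–Schmidt identity
`Tr( S⁻¹ conj(Γ) Γ S⁻¹ ) = Tr( conj(N)ᵀ N )`, i.e. `‖Γ Im(Γ)^{-1/2}‖_HS = ‖N‖_HS`. -/
theorem trace_identity_siegel (d : ℕ) (A B C D : Matrix (Fin d) (Fin d) ℝ)
    (hsymp : (Matrix.fromBlocks A B C D)ᵀ * (Matrix.fromBlocks 0 1 (-1) 0) *
      (Matrix.fromBlocks A B C D) = Matrix.fromBlocks 0 1 (-1) 0)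
    (M N Γ : Matrix (Fin d) (Fin d) ℂ)
    (hM : M = A.map (Complex.ofReal) + Complex.I • B.map (Complex.ofReal))
    (hN : N = C.map (Complex.ofReal) + Complex.I • D.map (Complex.ofReal))
    (hΓ : Γ = N * M⁻¹)
    (S : Matrix (Fin d) (Fin d) ℝ) (hS : S.PosDef) (hSsq : S * S = Γ.map Complex.im) :
    Matrix.trace ((S⁻¹.map Complex.ofReal) * (Γ.map (starRingEnd ℂ)) * Γ *
        (S⁻¹.map Complex.ofReal)) =
      Matrix.trace ((N.map (starRingEnd ℂ))ᵀ * N) := by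
  rcases Nat.eq_zero_or_pos d with hd | hd
  · subst hd
    simp [Matrix.trace]
  have hd' : Nonempty (Fin d) := ⟨⟨0, hd⟩⟩
  -- block identities over ℝ
  rw [Matrix.fromBlocks_transpose, Matrix.fromBlocks_multiply, Matrix.fromBlocks_multiply] at hsymp
  have h11 := congrArg Matrix.toBlocks₁₁ hsymp
  have h12 := congrArg Matrix.toBlocks₁₂ hsymp
  have h21 := congrArg Matrix.toBlocks₂₁ hsymp
  have h22 := congrArg Matrix.toBlocks₂₂ hsymp
  simp only [Matrix.toBlocks_fromBlocks₁₁, Matrix.toBlocks_fromBlocks₁₂,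
    Matrix.toBlocks_fromBlocks₂₁, Matrix.toBlocks_fromBlocks₂₂, Matrix.mul_zero, Matrix.zero_mul,
    mul_zero, zero_mul, mul_one, mul_neg, mul_neg_one, add_zero, zero_add, neg_zero]
    at h11 h12 h21 h22
  clear hsymp
  -- complexified blocks
  set A' : Matrix (Fin d) (Fin d) ℂ := A.map Complex.ofReal with hA'
  set B' : Matrix (Fin d) (Fin d) ℂ := B.map Complex.ofReal with hB'
  set C' : Matrix (Fin d) (Fin d) ℂ := C.map Complex.ofReal with hC'
  set D' : Matrix (Fin d) (Fin d) ℂ := D.map Complex.ofReal with hD'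
  have c11 : -C'ᵀ * A' + A'ᵀ * C' = 0 := by
    have := congrArg (Complex.ofRealHom : ℝ →+* ℂ).mapMatrix h11
    simpa [map_add, _root_.map_mul, map_neg, RingHom.mapMatrix_apply, (show (⇑Complex.ofRealHom : ℝ → ℂ) = Complex.ofReal from rfl), Matrix.transpose_map,
      hA', hB', hC', hD'] using this
  have c12 : -C'ᵀ * B' + A'ᵀ * D' = 1 := by
    have := congrArg (Complex.ofRealHom : ℝ →+* ℂ).mapMatrix h12
    simpa [map_add, _root_.map_mul, map_neg, RingHom.mapMatrix_apply, (show (⇑Complex.ofRealHom : ℝ → ℂ) = Complex.ofReal from rfl), Matrix.transpose_map,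
      hA', hB', hC', hD'] using this
  have c21 : -D'ᵀ * A' + B'ᵀ * C' = -1 := by
    have := congrArg (Complex.ofRealHom : ℝ →+* ℂ).mapMatrix h21
    simpa [map_add, _root_.map_mul, map_neg, RingHom.mapMatrix_apply, (show (⇑Complex.ofRealHom : ℝ → ℂ) = Complex.ofReal from rfl), Matrix.transpose_map,
      hA', hB', hC', hD'] using this
  have c22 : -D'ᵀ * B' + B'ᵀ * D' = 0 := by
    have := congrArg (Complex.ofRealHom : ℝ →+* ℂ).mapMatrix h22
    simpa [map_add, _root_.map_mul, map_neg, RingHom.mapMatrix_apply, (show (⇑Complex.ofRealHom : ℝ → ℂ) = Complex.ofReal from rfl), Matrix.transpose_map,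
      hA', hB', hC', hD'] using this
  have d11 : A'ᵀ * C' = C'ᵀ * A' := by
    have := c11; rw [neg_mul] at this; linear_combination (norm := abel) this
  have d22 : B'ᵀ * D' = D'ᵀ * B' := by
    have := c22; rw [neg_mul] at this; linear_combination (norm := abel) this
  have d12 : A'ᵀ * D' = 1 + C'ᵀ * B' := by
    have := c12; rw [neg_mul] at this; linear_combination (norm := abel) this
  have d21 : B'ᵀ * C' = D'ᵀ * A' - 1 := by
    have := c21; rw [neg_mul] at this; linear_combination (norm := abel) this
  -- conjugates
  set Mc : Matrix (Fin d) (Fin d) ℂ := M.map (starRingEnd ℂ) with hMcDef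
  set Nc : Matrix (Fin d) (Fin d) ℂ := N.map (starRingEnd ℂ) with hNcDef
  have hMc : Mc = A' - Complex.I • B' := by
    rw [hMcDef, hM]; ext i j
    simp [Matrix.map_apply, Matrix.add_apply, Matrix.sub_apply, Matrix.smul_apply, hA', hB',
      Complex.conj_ofReal, sub_eq_add_neg]
  have hNc : Nc = C' - Complex.I • D' := by
    rw [hNcDef, hN]; ext i j
    simp [Matrix.map_apply, Matrix.add_apply, Matrix.sub_apply, Matrix.smul_apply, hC', hD',
      Complex.conj_ofReal, sub_eq_add_neg]
  -- key algebraic identities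
  have e1 : Mᵀ * N = Nᵀ * M := by
    rw [hM, hN]
    simp only [Matrix.transpose_add, Matrix.transpose_smul, add_mul, mul_add,
      Matrix.smul_mul, Matrix.mul_smul, smul_smul, Complex.I_mul_I, neg_smul, one_smul, smul_add]
    rw [d11, d22, d12, d21]
    module
  have e2 : Mcᵀ * N - Ncᵀ * M = (2 * Complex.I) • 1 := by
    rw [hM, hN, hMc, hNc]
    simp only [Matrix.transpose_add, Matrix.transpose_sub, Matrix.transpose_smul, add_mul, mul_add,
      sub_mul, mul_sub, Matrix.smul_mul, Matrix.mul_smul, smul_smul, Complex.I_mul_I, neg_smul,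
      one_smul, smul_add, smul_sub]
    rw [d11, d22, d12, d21]
    module
  -- M is invertible
  have hSdet : IsUnit S.det := isUnit_iff_ne_zero.mpr hS.det_pos.ne'
  have hMdet : IsUnit M.det := by
    by_contra h
    rw [Matrix.nonsing_inv_apply_not_isUnit M h, Matrix.mul_zero] at hΓ
    have h0 : S * S = 0 := by rw [hSsq, hΓ]; ext i j; simp [Matrix.map_apply]
    have := hS.det_pos
    have hdet : S.det * S.det = 0 := by
      rw [← Matrix.det_mul, h0, Matrix.det_zero]
    nlinarith
  have hMl : M⁻¹ * M = 1 := Matrix.nonsing_inv_mul M hMdet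
  have hMr : M * M⁻¹ = 1 := Matrix.mul_nonsing_inv M hMdet
  set P : Matrix (Fin d) (Fin d) ℂ := M⁻¹ with hP
  set Pc : Matrix (Fin d) (Fin d) ℂ := P.map (starRingEnd ℂ) with hPcDef
  have hMcPc : Mc * Pc = 1 := by
    have := congrArg (starRingEnd ℂ).mapMatrix hMr
    simpa [RingHom.mapMatrix_apply, _root_.map_mul, hMcDef, hPcDef] using this
  have hPcMc : Pc * Mc = 1 := by
    have := congrArg (starRingEnd ℂ).mapMatrix hMl
    simpa [RingHom.mapMatrix_apply, _root_.map_mul, hMcDef, hPcDef] using this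
  set Γc : Matrix (Fin d) (Fin d) ℂ := Γ.map (starRingEnd ℂ) with hΓcDef
  have hΓc : Γc = Nc * Pc := by
    rw [hΓcDef, hΓ, Matrix.map_mul]
  -- symmetry of Γ
  have hGs : Γᵀ = Γ := by
    rw [hΓ, Matrix.transpose_mul]
    calc Pᵀ * Nᵀ = Pᵀ * Nᵀ * (M * P) := by rw [hMr, mul_one]
      _ = Pᵀ * (Nᵀ * M) * P := by noncomm_ring
      _ = Pᵀ * (Mᵀ * N) * P := by rw [e1]
      _ = (M * P)ᵀ * (N * P) := by rw [Matrix.transpose_mul]; noncomm_ring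
      _ = N * P := by rw [hMr, Matrix.transpose_one, Matrix.one_mul]
  have hΓcs : Γcᵀ = Γc := by
    rw [hΓcDef, ← Matrix.transpose_map, hGs]
  have hΓc' : Γc = Pcᵀ * Ncᵀ := by
    rw [← hΓcs, hΓc, Matrix.transpose_mul]
  -- imaginary part identity
  have hA1 : Pcᵀ * (Mcᵀ * N) * P = Γ := by
    calc Pcᵀ * (Mcᵀ * N) * P = (Mc * Pc)ᵀ * (N * P) := by
          rw [Matrix.transpose_mul]; noncomm_ring
      _ = Γ := by rw [hMcPc, Matrix.transpose_one, Matrix.one_mul, hΓ]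
  have hA2 : Pcᵀ * (Ncᵀ * M) * P = Γc := by
    calc Pcᵀ * (Ncᵀ * M) * P = (Pcᵀ * Ncᵀ) * (M * P) := by noncomm_ring
      _ = Γc := by rw [hMr, mul_one, hΓc']
  have hIm : Γ - Γc = (2 * Complex.I) • (Pcᵀ * P) := by
    calc Γ - Γc = Pcᵀ * (Mcᵀ * N - Ncᵀ * M) * P := by
          rw [mul_sub, sub_mul, hA1, hA2]
    _ = (2 * Complex.I) • (Pcᵀ * P) := by
          rw [e2]
          simp [Matrix.mul_smul, Matrix.smul_mul]
  -- relate to S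
  set T : Matrix (Fin d) (Fin d) ℂ := S.map Complex.ofReal with hT
  set T' : Matrix (Fin d) (Fin d) ℂ := S⁻¹.map Complex.ofReal with hT'
  have hTTeq : T * T = (Γ.map Complex.im).map Complex.ofReal := by
    have := congrArg (Complex.ofRealHom : ℝ →+* ℂ).mapMatrix hSsq
    simpa [RingHom.mapMatrix_apply, (show (⇑Complex.ofRealHom : ℝ → ℂ) = Complex.ofReal from rfl), _root_.map_mul, hT] using this
  have hImRe : Γ - Γc = (2 * Complex.I) • ((Γ.map Complex.im).map Complex.ofReal) := by
    ext i j
    simp only [Matrix.sub_apply, Matrix.smul_apply, Matrix.map_apply, hΓcDef, smul_eq_mul]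
    rw [Complex.sub_conj]
    push_cast
    ring
  have hTT : T * T = Pcᵀ * P := by
    have h2I : (2 * Complex.I) ≠ 0 := mul_ne_zero two_ne_zero Complex.I_ne_zero
    have heq : (2 * Complex.I) • (T * T) = (2 * Complex.I) • (Pcᵀ * P) := by
      rw [hTTeq, ← hImRe, hIm]
    exact smul_right_injective (Matrix (Fin d) (Fin d) ℂ) h2I heq
  have hT'l : T' * T = 1 := by
    have := congrArg (Complex.ofRealHom : ℝ →+* ℂ).mapMatrix (Matrix.nonsing_inv_mul S hSdet)
    simpa [RingHom.mapMatrix_apply, (show (⇑Complex.ofRealHom : ℝ → ℂ) = Complex.ofReal from rfl), _root_.map_mul, hT, hT'] using this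
  -- T' * T' = M * Mcᵀ
  have hPcP_inv : (Pcᵀ * P) * (M * Mcᵀ) = 1 := by
    calc (Pcᵀ * P) * (M * Mcᵀ) = Pcᵀ * (P * M) * Mcᵀ := by noncomm_ring
      _ = (Mc * Pc)ᵀ := by rw [hMl, mul_one, Matrix.transpose_mul]
      _ = 1 := by rw [hMcPc, Matrix.transpose_one]
  have hT'T' : T' * T' = M * Mcᵀ := by
    have h1 : (T' * T') * (Pcᵀ * P) = 1 := by
      rw [← hTT]
      calc T' * T' * (T * T) = T' * ((T' * T) * T) := by noncomm_ring
        _ = 1 := by rw [hT'l, Matrix.one_mul, hT'l]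
    calc T' * T' = (T' * T') * ((Pcᵀ * P) * (M * Mcᵀ)) := by rw [hPcP_inv, mul_one]
      _ = ((T' * T') * (Pcᵀ * P)) * (M * Mcᵀ) := by noncomm_ring
      _ = M * Mcᵀ := by rw [h1, Matrix.one_mul]
  -- final trace computation
  have hΓM : Γ * M = N := by
    rw [hΓ]
    calc N * P * M = N * (P * M) := by noncomm_ring
      _ = N := by rw [hMl, mul_one]
  calc Matrix.trace (T' * Γc * Γ * T')
      = Matrix.trace (T' * T' * (Γc * Γ)) := by
        rw [Matrix.trace_mul_comm (T' * Γc * Γ) T']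
        congr 1
        noncomm_ring
    _ = Matrix.trace ((Γc * Γ) * (M * Mcᵀ)) := by
        rw [hT'T', Matrix.trace_mul_comm]
    _ = Matrix.trace (Pcᵀ * (Ncᵀ * N * Mcᵀ)) := by
        rw [hΓc']
        congr 1
        calc Pcᵀ * Ncᵀ * Γ * (M * Mcᵀ) = Pcᵀ * Ncᵀ * (Γ * M) * Mcᵀ := by noncomm_ring
          _ = Pcᵀ * (Ncᵀ * N * Mcᵀ) := by rw [hΓM]; noncomm_ring
    _ = Matrix.trace ((Ncᵀ * N * Mcᵀ) * Pcᵀ) := Matrix.trace_mul_comm _ _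
    _ = Matrix.trace (Ncᵀ * N * (Mcᵀ * Pcᵀ)) := by congr 1; noncomm_ring
    _ = Matrix.trace (Ncᵀ * N) := by
        rw [← Matrix.transpose_mul, hPcMc, Matrix.transpose_one, mul_one]
end
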